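/- The interlace polynomials of paths satisfy the recurrence q(P_n) = q(P_{n−1}) + x · q(P_{n−2}) for n ≥ 2, where P_n is the path with n+1 vertices and n edges. -/

import Mathlib

/-- The pair `x, y` lies in different classes among (neighbors of `a` only,
neighbors of `b` only, neighbors of both), with both distinct from `a` and `b`. -/
def togglePair {V : Type} (G : SimpleGraph V) (a b x y : V) : Prop :=
  (x ≠ a ∧ x ≠ b ∧ y ≠ a ∧ y ≠ b) ∧
  (G.Adj a x ∨ G.Adj b x) ∧ (G.Adj a y ∨ G.Adj b y) ∧
  ¬((G.Adj a x ↔ G.Adj a y) ∧ (G.Adj b x ↔ G.Adj b y))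

lemma togglePair_comm {V : Type} (G : SimpleGraph V) (a b x y : V) :
    togglePair G a b x y ↔ togglePair G a b y x := by
  unfold togglePair; tauto

/-- The pivot `G^{ab}`: toggle the adjacency of every pair of vertices (distinct
from `a`, `b`) lying in different classes among (neighbors of `a` only,
neighbors of `b` only, neighbors of both); all other adjacencies unchanged. -/
def pivot {V : Type} (G : SimpleGraph V) (a b : V) : SimpleGraph V where
  Adj x y := (togglePair G a b x y ∧ x ≠ y ∧ ¬ G.Adj x y) ∨
    (¬ togglePair G a b x y ∧ G.Adj x y)
  symm := by
    constructor
    intro x y h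
    rcases h with ⟨ht, hxy, hna⟩ | ⟨ht, ha⟩
    · exact Or.inl ⟨(togglePair_comm G a b x y).mp ht, hxy.symm,
        fun h => hna h.symm⟩
    · exact Or.inr ⟨fun h => ht ((togglePair_comm G a b y x).mp h), ha.symm⟩
  loopless := by
    constructor
    intro x h
    rcases h with ⟨_, hxy, _⟩ | ⟨_, ha⟩
    · exact hxy rfl
    · exact (G.ne_of_adj ha) rfl

/-- Deletion of the vertex `a` from `G`. -/
def delVert {V : Type} (G : SimpleGraph V) (a : V) : SimpleGraph {v : V // v ≠ a} :=
  G.comap (fun v => v.1)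

/-- `q` is an interlace polynomial map: invariant under graph isomorphism,
satisfying the pivot-deletion recursion `q(G) = q(G-a) + q(G^{ab}-b)` for every
edge `ab`, and equal to `x^n` on the edgeless graph on `n` vertices. -/
def IsInterlacePoly
    (q : ∀ (V : Type) [Fintype V] [DecidableEq V], SimpleGraph V → Polynomial ℤ) : Prop :=
  (∀ (V W : Type) [Fintype V] [DecidableEq V] [Fintype W] [DecidableEq W]
      (G : SimpleGraph V) (H : SimpleGraph W), Nonempty (G ≃g H) → q V G = q W H) ∧
  (∀ (V : Type) [Fintype V] [DecidableEq V] (G : SimpleGraph V) (a b : V), G.Adj a b →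
      q V G = q {v : V // v ≠ a} (delVert G a) +
        q {v : V // v ≠ b} (delVert (pivot G a b) b)) ∧
  (∀ (V : Type) [Fintype V] [DecidableEq V],
      q V (⊥ : SimpleGraph V) = Polynomial.X ^ (Fintype.card V))

/-! ### Auxiliary lemmas -/

lemma togglePair_comap {V W : Type} (G : SimpleGraph V) (f : W → V)
    (hf : Function.Injective f) (a b x y : W) :
    togglePair (G.comap f) a b x y ↔ togglePair G (f a) (f b) (f x) (f y) := by
  unfold togglePair
  simp [SimpleGraph.comap, hf.ne_iff]

lemma pivot_comap {V W : Type} (G : SimpleGraph V) (f : W → V)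
    (hf : Function.Injective f) (a b : W) :
    pivot (G.comap f) a b = (pivot G (f a) (f b)).comap f := by
  ext x y
  simp [pivot, SimpleGraph.comap_adj, togglePair_comap G f hf, hf.ne_iff]

lemma pivot_delVert {V : Type} (H : SimpleGraph V) (w : V) (a b : {v : V // v ≠ w}) :
    pivot (delVert H w) a b = delVert (pivot H a.1 b.1) w :=
  pivot_comap H _ Subtype.val_injective a b

/-- Exchange the order of two vertex deletions, as an equivalence of the
underlying vertex subtypes. -/
def swapSub {V : Type} (a b : V) (hab : a ≠ b) :
    {x : {v : V // v ≠ a} // x ≠ ⟨b, hab.symm⟩} ≃ {x : {v : V // v ≠ b} // x ≠ ⟨a, hab⟩} where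
  toFun x := ⟨⟨x.1.1, by simpa [Subtype.ext_iff] using x.2⟩,
    by simpa [Subtype.ext_iff] using x.1.2⟩
  invFun x := ⟨⟨x.1.1, by simpa [Subtype.ext_iff] using x.2⟩,
    by simpa [Subtype.ext_iff] using x.1.2⟩
  left_inv x := Subtype.ext (Subtype.ext rfl)
  right_inv x := Subtype.ext (Subtype.ext rfl)

/-- Exchange the order of two vertex deletions, as a graph isomorphism. -/
def delDelIso {V : Type} (H : SimpleGraph V) (a w : V) (haw : a ≠ w) :
    (delVert (delVert H a) ⟨w, haw.symm⟩) ≃g (delVert (delVert H w) ⟨a, haw⟩) :=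
  ⟨swapSub a w haw, by intro x y; exact Iff.rfl⟩

lemma card_ne {V : Type} [Fintype V] [DecidableEq V] (a : V) :
    Fintype.card {v : V // v ≠ a} = Fintype.card V - 1 := by
  simp [ne_eq, Fintype.card_subtype_compl, Fintype.card_subtype_eq]

/-- Removing an isolated vertex divides the interlace polynomial by `x`. -/
lemma isolated_mul
    (q : ∀ (V : Type) [Fintype V] [DecidableEq V], SimpleGraph V → Polynomial ℤ)
    (hq : IsInterlacePoly q) :
    ∀ (m : ℕ) (V : Type) [Fintype V] [DecidableEq V] (H : SimpleGraph V) (w : V),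
      Fintype.card V = m → (∀ v, ¬ H.Adj w v) →
      q V H = Polynomial.X * q {v : V // v ≠ w} (delVert H w) := by
  intro m
  induction m using Nat.strong_induction_on with
  | _ m IH =>
    intro V _ _ H w hcard hw
    by_cases hE : ∃ a b, H.Adj a b
    · obtain ⟨a, b, hab⟩ := hE
      have haw : a ≠ w := fun h => hw b (h ▸ hab)
      have hbw : b ≠ w := fun h => hw a (h ▸ hab.symm)
      have hm1 : Fintype.card V - 1 < m := by
        have : 0 < Fintype.card V := Fintype.card_pos_iff.mpr ⟨w⟩
        omega
      -- the recursion on `H` at the edge `ab`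
      have h1 := hq.2.1 V H a b hab
      -- `w` is isolated in `H - a`
      have hw1 : ∀ v, ¬ (delVert H a).Adj ⟨w, haw.symm⟩ v := fun v h => hw v.1 h
      -- `w` is isolated in `pivot H a b`, hence in `(pivot H a b) - b`
      have hwp : ∀ v, ¬ (pivot H a b).Adj w v := by
        intro v h
        rcases h with ⟨⟨_, h2, _⟩, _⟩ | ⟨_, h2⟩
        · rcases h2 with h2 | h2
          · exact hw a h2.symm
          · exact hw b h2.symm
        · exact hw v h2
      have hw2 : ∀ v, ¬ (delVert (pivot H a b) b).Adj ⟨w, hbw.symm⟩ v :=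
        fun v h => hwp v.1 h
      have e1 := IH (Fintype.card V - 1) hm1 {v : V // v ≠ a} (delVert H a)
        ⟨w, haw.symm⟩ (card_ne a) hw1
      have e2 := IH (Fintype.card V - 1) hm1 {v : V // v ≠ b}
        (delVert (pivot H a b) b) ⟨w, hbw.symm⟩ (card_ne b) hw2
      -- the recursion on `H - w` at the edge `ab`
      have hab' : (delVert H w).Adj ⟨a, haw⟩ ⟨b, hbw⟩ := hab
      have h2 := hq.2.1 {v : V // v ≠ w} (delVert H w) ⟨a, haw⟩ ⟨b, hbw⟩ hab'
      rw [pivot_delVert] at h2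
      have i1 := hq.1 _ _ (delVert (delVert H a) ⟨w, haw.symm⟩)
        (delVert (delVert H w) ⟨a, haw⟩) ⟨delDelIso H a w haw⟩
      have i2 := hq.1 _ _ (delVert (delVert (pivot H a b) b) ⟨w, hbw.symm⟩)
        (delVert (delVert (pivot H a b) w) ⟨b, hbw⟩) ⟨delDelIso (pivot H a b) b w hbw⟩
      rw [h1, e1, e2, i1, i2, h2, mul_add]
    · push_neg at hE
      have hbot : H = ⊥ := by
        ext x y
        simp [hE x y]
      have hone : 1 ≤ m := by
        have : 0 < Fintype.card V := Fintype.card_pos_iff.mpr ⟨w⟩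
        omega
      have hdel : delVert H w = (⊥ : SimpleGraph {v : V // v ≠ w}) := by
        ext x y
        exact iff_of_false (hE x.1 y.1) (by simp)
      rw [hdel, hbot, hq.2.2, hq.2.2, card_ne w, hcard, ← pow_succ']
      congr 1
      omega

theorem interlacePoly_path_recurrence
    (q : ∀ (V : Type) [Fintype V] [DecidableEq V], SimpleGraph V → Polynomial ℤ)
    (hq : IsInterlacePoly q) (n : ℕ) (hn : 2 ≤ n) :
    q (Fin (n + 1)) (SimpleGraph.pathGraph (n + 1)) =
      q (Fin n) (SimpleGraph.pathGraph n) +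
        Polynomial.X * q (Fin (n - 1)) (SimpleGraph.pathGraph (n - 1)) := by
  obtain ⟨k, rfl⟩ : ∃ k, n = k + 2 := ⟨n - 2, by omega⟩
  set G := SimpleGraph.pathGraph (k + 3) with hG
  have h01 : (0 : Fin (k + 3)) ≠ 1 := by
    simp [Fin.ext_iff]
  have hab : G.Adj 0 1 := by
    simp [hG, SimpleGraph.pathGraph_adj]
  -- the pivot at the end edge changes nothing
  have hnt : ∀ u v : Fin (k + 3), ¬ togglePair G 0 1 u v := by
    rintro u v ⟨⟨hua, hub, hva, hvb⟩, hu, hv, hne⟩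
    have hval : ∀ z : Fin (k + 3), z ≠ 0 → z ≠ 1 →
        (G.Adj 0 z ∨ G.Adj 1 z) → z.val = 2 := by
      intro z hz0 hz1 hz
      simp only [ne_eq, Fin.ext_iff, Fin.val_zero, Fin.val_one] at hz0 hz1
      rcases hz with h | h <;> rw [hG, SimpleGraph.pathGraph_adj] at h <;>
        simp only [Fin.val_zero, Fin.val_one] at h <;> omega
    have huv : u = v := Fin.ext ((hval u hua hub hu).trans (hval v hva hvb hv).symm)
    subst huv
    exact hne ⟨Iff.rfl, Iff.rfl⟩
  have hpiv : pivot G 0 1 = G := by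
    ext x y
    simp [pivot, hnt x y]
  have h1 := hq.2.1 (Fin (k + 3)) G 0 1 hab
  rw [hpiv] at h1
  -- `G - 0` is a path on `k + 2` vertices
  have i1 : q {v : Fin (k + 3) // v ≠ 0} (delVert G 0) =
      q (Fin (k + 2)) (SimpleGraph.pathGraph (k + 2)) := by
    refine hq.1 _ _ _ _ ⟨⟨?_, ?_⟩⟩
    · exact
      { toFun := fun v => ⟨v.1.1 - 1, by
          have h1 := v.1.isLt
          have h0 : v.1.1 ≠ 0 := by simpa [← Fin.val_eq_zero_iff] using v.2
          omega⟩
        invFun := fun i => ⟨⟨i.1 + 1, by omega⟩, by simp [← Fin.val_eq_zero_iff]⟩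
        left_inv := fun v => by
          have h0 : v.1.1 ≠ 0 := by simpa [← Fin.val_eq_zero_iff] using v.2
          exact Subtype.ext (Fin.ext (by simp; omega))
        right_inv := fun i => Fin.ext (by simp) }
    · intro u v
      have hu0 : u.1.1 ≠ 0 := by simpa [← Fin.val_eq_zero_iff] using u.2
      have hv0 : v.1.1 ≠ 0 := by simpa [← Fin.val_eq_zero_iff] using v.2
      simp only [delVert, SimpleGraph.comap_adj, hG, SimpleGraph.pathGraph_adj,
        Equiv.coe_fn_mk]
      omega
  -- `0` is isolated in `G - 1`
  have hiso : ∀ v, ¬ (delVert G 1).Adj ⟨0, h01⟩ v := by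
    intro v h
    have h' : G.Adj 0 v.1 := h
    rw [hG, SimpleGraph.pathGraph_adj] at h'
    have hv1 : v.1.1 ≠ 1 := by simpa [Fin.ext_iff] using v.2
    simp only [Fin.val_zero] at h'
    omega
  have h2 := isolated_mul q hq (Fintype.card {v : Fin (k + 3) // v ≠ 1})
    {v : Fin (k + 3) // v ≠ 1} (delVert G 1) ⟨0, h01⟩ rfl hiso
  -- `(G - 1) - 0` is a path on `k + 1` vertices
  have i2 : q {x : {v : Fin (k + 3) // v ≠ 1} // x ≠ ⟨0, h01⟩}
      (delVert (delVert G 1) ⟨0, h01⟩) =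
      q (Fin (k + 1)) (SimpleGraph.pathGraph (k + 1)) := by
    refine hq.1 _ _ _ _ ⟨⟨?_, ?_⟩⟩
    · exact
      { toFun := fun v => ⟨v.1.1.1 - 2, by
          have h1 := v.1.1.isLt
          have ha : v.1.1.1 ≠ 1 := by simpa [Fin.ext_iff] using v.1.2
          have hb : v.1.1.1 ≠ 0 := by
            simpa [Subtype.ext_iff, ← Fin.val_eq_zero_iff] using v.2
          omega⟩
        invFun := fun i => ⟨⟨⟨i.1 + 2, by omega⟩, by simp [Fin.ext_iff]⟩,
          by simp [Subtype.ext_iff, ← Fin.val_eq_zero_iff]⟩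
        left_inv := fun v => by
          have ha : v.1.1.1 ≠ 1 := by simpa [Fin.ext_iff] using v.1.2
          have hb : v.1.1.1 ≠ 0 := by
            simpa [Subtype.ext_iff, ← Fin.val_eq_zero_iff] using v.2
          exact Subtype.ext (Subtype.ext (Fin.ext (by simp; omega)))
        right_inv := fun i => Fin.ext (by simp) }
    · intro u v
      have hua : u.1.1.1 ≠ 1 := by simpa [Fin.ext_iff] using u.1.2
      have hub : u.1.1.1 ≠ 0 := by simpa [Subtype.ext_iff, ← Fin.val_eq_zero_iff] using u.2
      have hva : v.1.1.1 ≠ 1 := by simpa [Fin.ext_iff] using v.1.2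
      have hvb : v.1.1.1 ≠ 0 := by simpa [Subtype.ext_iff, ← Fin.val_eq_zero_iff] using v.2
      simp only [delVert, SimpleGraph.comap_adj, hG, SimpleGraph.pathGraph_adj,
        Equiv.coe_fn_mk]
      omega
  rw [show k + 2 - 1 = k + 1 from by omega, h1, i1, h2, i2]
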